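/- Suppose B : S²V → V* is surjective. Then the Lie algebra n = (V⊗W) ⊕ V* ⊕ W has lower central series n ⊃ [n,n] = V* ⊕ W ⊃ [n,[n,n]] = W ⊃ 0, so n is 3-step nilpotent and not 2-step nilpotent (when V ≠ 0 and c ≠ 0). -/
import Mathlib


open TensorProduct

variable {V W : Type*} [AddCommGroup V] [Module ℂ V] [AddCommGroup W] [Module ℂ W]

/-- The underlying space of the Lie algebra `n = (V ⊗ W) ⊕ V* ⊕ W`. -/
abbrev nSpace (V W : Type*) [AddCommGroup V] [Module ℂ V] [AddCommGroup W] [Module ℂ W] :=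
  (V ⊗[ℂ] W) × Module.Dual ℂ V × W

/-- The bilinear map `(V ⊗ W) × (V ⊗ W) → V*` sending `(v₁⊗w₁, v₂⊗w₂)` to `ω(w₁,w₂) • B(v₁,v₂)`,
where `B v₁ v₂ = c v₁ v₂`. -/
noncomputable def brOne (c : V →ₗ[ℂ] V →ₗ[ℂ] Module.Dual ℂ V) (ω : W →ₗ[ℂ] W →ₗ[ℂ] ℂ) :
    (V ⊗[ℂ] W) →ₗ[ℂ] (V ⊗[ℂ] W) →ₗ[ℂ] Module.Dual ℂ V :=
  TensorProduct.curry ((TensorProduct.rid ℂ (Module.Dual ℂ V)).toLinearMap ∘ₗ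
    TensorProduct.map (TensorProduct.lift c) (TensorProduct.lift ω) ∘ₗ
    (TensorProduct.tensorTensorTensorComm ℂ V W V W).toLinearMap)

/-- The pairing `V* × (V ⊗ W) → W` sending `(φ, v⊗w)` to `φ(v) • w`. -/
noncomputable def brTwo (φ : Module.Dual ℂ V) : (V ⊗[ℂ] W) →ₗ[ℂ] W :=
  (TensorProduct.lid ℂ W).toLinearMap ∘ₗ TensorProduct.map φ LinearMap.id

/-- The bracket on `n = (V ⊗ W) ⊕ V* ⊕ W`:
`[v₁⊗w₁, v₂⊗w₂] = ω(w₁,w₂) B(v₁,v₂)`, `[φ, v⊗w] = φ(v) w`, other brackets zero,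
extended antisymmetrically and bilinearly. -/
noncomputable def nBracket (c : V →ₗ[ℂ] V →ₗ[ℂ] Module.Dual ℂ V) (ω : W →ₗ[ℂ] W →ₗ[ℂ] ℂ)
    (x y : nSpace V W) : nSpace V W :=
  (0, brOne c ω x.1 y.1, brTwo x.2.1 y.1 - brTwo y.2.1 x.1)

theorem brOne_tmul (c : V →ₗ[ℂ] V →ₗ[ℂ] Module.Dual ℂ V) (ω : W →ₗ[ℂ] W →ₗ[ℂ] ℂ)
    (v₁ v₂ : V) (w₁ w₂ : W) :
    brOne c ω (v₁ ⊗ₜ w₁) (v₂ ⊗ₜ w₂) = ω w₁ w₂ • c v₁ v₂ := by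
  simp [brOne]

theorem brTwo_tmul (φ : Module.Dual ℂ V) (v : V) (w : W) :
    brTwo (W := W) φ (v ⊗ₜ w) = φ v • w := by
  simp [brTwo]

theorem brTwo_zero : brTwo (V := V) (W := W) (0 : Module.Dual ℂ V) = 0 := by
  apply TensorProduct.ext'
  intro v w
  simp [brTwo_tmul]

/-- If `B : S²V → V*` is surjective (and `V ≠ 0`, `c ≠ 0`), the lower central series of
`n` is `n ⊃ [n,n] = V* ⊕ W ⊃ [n,[n,n]] = W ⊃ 0`: `n` is 3-step nilpotent and not
2-step nilpotent. -/
theorem lower_central_series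
    [Nontrivial V] (hW : Module.finrank ℂ W = 2)
    (c : V →ₗ[ℂ] V →ₗ[ℂ] Module.Dual ℂ V) (hc0 : c ≠ 0)
    (hc₁ : ∀ u v w : V, c u v w = c v u w) (hc₂ : ∀ u v w : V, c u v w = c u w v)
    (ω : W →ₗ[ℂ] W →ₗ[ℂ] ℂ) (hω : ∀ w : W, ω w w = 0) (hω0 : ω ≠ 0)
    (hsurj : Submodule.span ℂ {φ : Module.Dual ℂ V | ∃ v₁ v₂ : V, φ = c v₁ v₂} = ⊤) :
    Submodule.span ℂ {z : nSpace V W | ∃ x y : nSpace V W, z = nBracket c ω x y} =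
      Submodule.prod (⊥ : Submodule ℂ (V ⊗[ℂ] W))
        (⊤ : Submodule ℂ (Module.Dual ℂ V × W)) ∧
    Submodule.span ℂ {z : nSpace V W | ∃ x : nSpace V W,
        ∃ y ∈ Submodule.prod (⊥ : Submodule ℂ (V ⊗[ℂ] W))
          (⊤ : Submodule ℂ (Module.Dual ℂ V × W)), z = nBracket c ω x y} =
      Submodule.prod (⊥ : Submodule ℂ (V ⊗[ℂ] W))
        (Submodule.prod (⊥ : Submodule ℂ (Module.Dual ℂ V)) (⊤ : Submodule ℂ W)) ∧
    Submodule.prod (⊥ : Submodule ℂ (V ⊗[ℂ] W))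
        (Submodule.prod (⊥ : Submodule ℂ (Module.Dual ℂ V)) (⊤ : Submodule ℂ W)) ≠ ⊥ ∧
    Submodule.prod (⊥ : Submodule ℂ (V ⊗[ℂ] W))
        (⊤ : Submodule ℂ (Module.Dual ℂ V × W)) ≠ ⊤ ∧
    (∀ x : nSpace V W,
      ∀ y ∈ Submodule.prod (⊥ : Submodule ℂ (V ⊗[ℂ] W))
        (Submodule.prod (⊥ : Submodule ℂ (Module.Dual ℂ V)) (⊤ : Submodule ℂ W)),
      nBracket c ω x y = 0) := by
  -- basic elements
  obtain ⟨u₀, v₀, t₀, hct⟩ : ∃ u v t : V, c u v t ≠ 0 := by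
    by_contra h
    push_neg at h
    exact hc0 (by ext u v t; simpa using h u v t)
  set φ₀ : Module.Dual ℂ V := (c u₀ v₀ t₀)⁻¹ • c u₀ v₀ with hφ₀
  have hφ₀t : φ₀ t₀ = 1 := by
    simp [hφ₀, inv_mul_cancel₀ hct]
  obtain ⟨a₀, b₀, hωab⟩ : ∃ a b : W, ω a b ≠ 0 := by
    by_contra h
    push_neg at h
    exact hω0 (by ext a b; simpa using h a b)
  set w₁ : W := (ω a₀ b₀)⁻¹ • a₀ with hw₁
  have hω1 : ω w₁ b₀ = 1 := by
    simp [hw₁, inv_mul_cancel₀ hωab]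
  -- every (0,0,w) is a bracket
  have hbW : ∀ w : W, (0, 0, w) = nBracket c ω ((0 : V ⊗[ℂ] W), φ₀, (0 : W)) (t₀ ⊗ₜ w, 0, 0) := by
    intro w
    simp [nBracket, brTwo_tmul, brTwo_zero, hφ₀t]
  -- claim 5
  have h5 : ∀ x : nSpace V W,
      ∀ y ∈ Submodule.prod (⊥ : Submodule ℂ (V ⊗[ℂ] W))
        (Submodule.prod (⊥ : Submodule ℂ (Module.Dual ℂ V)) (⊤ : Submodule ℂ W)),
      nBracket c ω x y = 0 := by
    intro x y hy
    rw [Submodule.mem_prod] at hy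
    obtain ⟨hy1, hy2⟩ := hy
    rw [Submodule.mem_prod] at hy2
    have hy1' : y.1 = 0 := hy1
    have hy21 : y.2.1 = 0 := hy2.1
    simp [nBracket, hy1', hy21, brTwo_zero, Prod.ext_iff]
  refine ⟨?_, ?_, ?_, ?_, h5⟩
  · -- first span
    apply le_antisymm
    · rw [Submodule.span_le]
      rintro z ⟨x, y, rfl⟩
      exact ⟨Submodule.zero_mem _, trivial⟩
    · rintro ⟨z1, φ, w⟩ ⟨hz1, -⟩
      have hz1' : z1 = 0 := hz1
      subst hz1'
      have hsum : ((0 : V ⊗[ℂ] W), φ, w) = ((0 : V ⊗[ℂ] W), φ, (0:W)) + (0, 0, w) := by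
        simp
      rw [hsum]
      refine Submodule.add_mem _ ?_ ?_
      · -- (0, φ, 0)
        let L : Module.Dual ℂ V →ₗ[ℂ] nSpace V W :=
          { toFun := fun ψ => (0, ψ, 0)
            map_add' := by intro ψ χ; simp [Prod.ext_iff]
            map_smul' := by intro r ψ; simp [Prod.ext_iff] }
        have hφmem : φ ∈ Submodule.span ℂ {ψ : Module.Dual ℂ V | ∃ v₁ v₂ : V, ψ = c v₁ v₂} := by
          rw [hsurj]; trivial
        have : L φ ∈ Submodule.map L
            (Submodule.span ℂ {ψ : Module.Dual ℂ V | ∃ v₁ v₂ : V, ψ = c v₁ v₂}) :=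
          Submodule.mem_map_of_mem hφmem
        rw [Submodule.map_span] at this
        refine Submodule.span_mono ?_ this
        rintro z ⟨ψ, ⟨v₁, v₂, rfl⟩, rfl⟩
        refine ⟨(v₁ ⊗ₜ w₁, 0, 0), (v₂ ⊗ₜ b₀, 0, 0), ?_⟩
        simp [L, nBracket, brOne_tmul, brTwo_zero, hω1, Prod.ext_iff]
      · exact Submodule.subset_span ⟨_, _, hbW w⟩
  · -- second span
    apply le_antisymm
    · rw [Submodule.span_le]
      rintro z ⟨x, y, hy, rfl⟩
      rw [Submodule.mem_prod] at hy
      have hy1' : y.1 = 0 := hy.1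
      refine ⟨?_, ?_, trivial⟩
      · rfl
      · show brOne c ω x.1 y.1 ∈ (⊥ : Submodule ℂ (Module.Dual ℂ V))
        simp [hy1']
    · rintro ⟨z1, φ, w⟩ ⟨hz1, hφ, -⟩
      have hz1' : z1 = 0 := hz1
      have hφ' : φ = 0 := hφ
      subst hz1'; subst hφ'
      refine Submodule.subset_span ?_
      refine ⟨(t₀ ⊗ₜ (-w), 0, 0), ((0 : V ⊗[ℂ] W), φ₀, (0:W)), ⟨Submodule.zero_mem _, trivial⟩, ?_⟩
      simp [nBracket, brTwo_tmul, brTwo_zero, hφ₀t, Prod.ext_iff]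
  · -- W part nontrivial
    have : Nontrivial W := by
      have : 0 < Module.finrank ℂ W := by omega
      exact Module.nontrivial_of_finrank_pos this
    obtain ⟨w, hw⟩ := exists_ne (0 : W)
    intro h
    have : ((0 : V ⊗[ℂ] W), (0 : Module.Dual ℂ V), w) ∈
        Submodule.prod (⊥ : Submodule ℂ (V ⊗[ℂ] W))
          (Submodule.prod (⊥ : Submodule ℂ (Module.Dual ℂ V)) (⊤ : Submodule ℂ W)) :=
      ⟨rfl, rfl, trivial⟩
    rw [h, Submodule.mem_bot, Prod.mk_eq_zero, Prod.mk_eq_zero] at this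
    exact hw this.2.2
  · -- V ⊗ W nonzero
    have hWnt : Nontrivial W := by
      have : 0 < Module.finrank ℂ W := by omega
      exact Module.nontrivial_of_finrank_pos this
    obtain ⟨v, hv⟩ := exists_ne (0 : V)
    obtain ⟨w, hw⟩ := exists_ne (0 : W)
    obtain ⟨φ, hφv⟩ : ∃ φ : Module.Dual ℂ V, φ v ≠ 0 := by
      by_contra h
      push_neg at h
      exact hv ((Module.forall_dual_apply_eq_zero_iff ℂ v).mp h)
    obtain ⟨ψ, hψw⟩ : ∃ ψ : Module.Dual ℂ W, ψ w ≠ 0 := by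
      by_contra h
      push_neg at h
      exact hw ((Module.forall_dual_apply_eq_zero_iff ℂ w).mp h)
    have htm : (v ⊗ₜ w : V ⊗[ℂ] W) ≠ 0 := by
      intro h0
      have := congrArg ((TensorProduct.lid ℂ ℂ).toLinearMap ∘ₗ TensorProduct.map φ ψ) h0
      simp at this
      rcases this with h | h
      · exact hφv h
      · exact hψw h
    intro h
    have : ((v ⊗ₜ w : V ⊗[ℂ] W), (0 : Module.Dual ℂ V), (0 : W)) ∈
        Submodule.prod (⊥ : Submodule ℂ (V ⊗[ℂ] W))
          (⊤ : Submodule ℂ (Module.Dual ℂ V × W)) := by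
      rw [h]; trivial
    exact htm this.1
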